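/- arXiv:1205.6300 — 4 statements merged into one kernel-verified Lean document; each statement's English description precedes it below -/
import Mathlib

section
/- Let (V,d,μ) be a probability metric space. For every x ∈ ℝ, sup over all integrable 1-Lipschitz f : V → ℝ of μ{u : f(u) - E_μ f ≥ x} equals sup over all nonempty measurable A ⊆ V of μ{u : g_A(u) - E_μ g_A ≥ x}, where g_A(u) = -d(A,u), provided g_A is integrable for each such A. -/
/-!
If `f` is 1-Lipschitz and `A = {f - E_μ f ≥ x}` is nonempty, then `f ≥ E_μ f + x` on `A` forces
`-d(A, ·) ≤ f - (E_μ f + x)` everywhere. Integrating gives `E_μ g_A ≤ -x`, and since `g_A = 0` on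
`A`, the set `A` lies inside `{g_A - E_μ g_A ≥ x}`. Conversely every `g_A` is itself 1-Lipschitz.
-/

open MeasureTheory Metric

section

variable {α : Type*} [PseudoMetricSpace α]

lemma lipschitzWith_one_iff_abs_sub_le {f : α → ℝ} :
    LipschitzWith 1 f ↔ ∀ u v, |f u - f v| ≤ dist u v := by
  simp [lipschitzWith_iff_dist_le_mul, Real.dist_eq]

lemma sub_le_infDist_of_forall_le {f : α → ℝ} (hf : LipschitzWith 1 f) {A : Set α}
    (hA : A.Nonempty) {c : ℝ} (hc : ∀ a ∈ A, c ≤ f a) (w : α) : c - f w ≤ infDist w A := by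
  refine (le_infDist hA).2 fun a ha => ?_
  have hfa : f a - f w ≤ dist w a := by
    rw [dist_comm]
    exact (abs_le.1 (lipschitzWith_one_iff_abs_sub_le.1 hf a w)).2
  linarith [hc a ha]

lemma integral_neg_infDist_le [MeasurableSpace α] {μ : Measure α} [IsProbabilityMeasure μ]
    {f : α → ℝ} (hf : LipschitzWith 1 f) (hfi : Integrable f μ) {A : Set α} (hA : A.Nonempty)
    (hAi : Integrable (fun u => infDist u A) μ) {c : ℝ} (hc : ∀ a ∈ A, c ≤ f a) :
    ∫ v, -infDist v A ∂μ ≤ ∫ v, f v ∂μ - c :=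
  calc ∫ v, -infDist v A ∂μ ≤ ∫ v, f v - c ∂μ :=
        integral_mono hAi.neg (hfi.sub (integrable_const c)) fun w => by
          linarith [sub_le_infDist_of_forall_le hf hA hc w]
    _ = ∫ v, f v ∂μ - c := by simp [integral_sub hfi (integrable_const c)]

lemma subset_neg_infDist_superlevel [MeasurableSpace α] {μ : Measure α} [IsProbabilityMeasure μ]
    {f : α → ℝ} (hf : LipschitzWith 1 f) (hfi : Integrable f μ) {A : Set α} (hA : A.Nonempty)
    (hAi : Integrable (fun u => infDist u A) μ) {x : ℝ}
    (hAf : ∀ a ∈ A, f a - ∫ v, f v ∂μ ≥ x) :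
    A ⊆ {u | -infDist u A - ∫ v, -infDist v A ∂μ ≥ x} := by
  intro u hu
  have hint := integral_neg_infDist_le hf hfi hA hAi (c := ∫ v, f v ∂μ + x)
    fun a ha => by linarith [hAf a ha]
  rw [Set.mem_ofPred_eq, infDist_zero_of_mem hu]
  linarith

end

theorem stmt_3 {V : Type*} [MetricSpace V] [MeasurableSpace V] [BorelSpace V]
    (μ : Measure V) [IsProbabilityMeasure μ]
    (hintA : ∀ A : Set V, A.Nonempty → MeasurableSet A →
      Integrable (fun u => Metric.infDist u A) μ)
    (x : ℝ) :
    (⨆ (f : V → ℝ) (_ : Integrable f μ) (_ : ∀ u v, |f u - f v| ≤ dist u v),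
        μ {u | f u - ∫ v, f v ∂μ ≥ x}) =
    ⨆ (A : Set V) (_ : A.Nonempty) (_ : MeasurableSet A),
        μ {u | (-Metric.infDist u A) - ∫ v, (-Metric.infDist v A) ∂μ ≥ x} := by
  apply le_antisymm
  · refine iSup_le fun f => iSup_le fun hfi => iSup_le fun hf => ?_
    rw [← lipschitzWith_one_iff_abs_sub_le] at hf
    set A := {u | f u - ∫ v, f v ∂μ ≥ x}
    rcases A.eq_empty_or_nonempty with hA | hA
    · simp [A, hA]
    have hAm : MeasurableSet A :=
      measurableSet_le measurable_const (hf.continuous.measurable.sub_const _)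
    exact le_iSup₂_of_le A hA <| le_iSup_of_le hAm <|
      measure_mono (subset_neg_infDist_superlevel hf hfi hA (hintA A hA hAm) fun _ ha => ha)
  · refine iSup_le fun A => iSup_le fun hA => iSup_le fun hAm => ?_
    have hg : LipschitzWith 1 fun u => -infDist u A := (lipschitz_infDist_pt A).neg
    exact le_iSup₂_of_le _ (hintA A hA hAm).neg <|
      le_iSup_of_le (lipschitzWith_one_iff_abs_sub_le.1 hg) le_rfl
end

section
/- Let (V,d,μ) be a finite probability metric space (V finite, μ a probability measure on V). For every x ∈ ℝ, the supremum over 1-Lipschitz functions f : V → ℝ of μ{u : f(u) - E_μ f ≥ x} is attained, and is attained by a function of the form f(u) = -d(A,u) for some nonempty A ⊆ V. -/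
open MeasureTheory

private lemma aux_int_infDist {V : Type*} [MetricSpace V] [Fintype V]
    [MeasurableSpace V] [BorelSpace V]
    (μ : Measure V) [IsProbabilityMeasure μ] (x : ℝ) (f : V → ℝ)
    (hf : ∀ u v, |f u - f v| ≤ dist u v)
    (hne : {u | f u - ∫ v, f v ∂μ ≥ x}.Nonempty) :
    x ≤ ∫ v, Metric.infDist v {u | f u - ∫ v, f v ∂μ ≥ x} ∂μ := by
  set m := ∫ v, f v ∂μ with hm
  set A : Set V := {u | f u - m ≥ x} with hA
  have hpt : ∀ v : V, m + x - f v ≤ Metric.infDist v A := by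
    intro v
    rw [Metric.infDist_eq_iInf]
    have : Nonempty ↥A := hne.to_subtype
    refine le_ciInf fun ⟨a, ha⟩ => ?_
    have h1 : f a - f v ≤ dist v a := by
      have := hf a v
      rw [abs_sub_le_iff] at this
      linarith [this.1, dist_comm v a]
    have h2 : x ≤ f a - m := ha
    linarith
  have hint : ∫ v, (m + x - f v) ∂μ ≤ ∫ v, Metric.infDist v A ∂μ :=
    integral_mono (Integrable.of_finite) (Integrable.of_finite) hpt
  have hval : ∫ v, (m + x - f v) ∂μ = x := by
    rw [integral_sub (integrable_const _) Integrable.of_finite, integral_const]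
    simp [← hm]
  linarith

theorem stmt_10 {V : Type*} [MetricSpace V] [Fintype V]
    [MeasurableSpace V] [BorelSpace V]
    (μ : Measure V) [IsProbabilityMeasure μ] (x : ℝ) :
    ∃ A : Set V, A.Nonempty ∧
      (⨆ (f : V → ℝ) (_ : ∀ u v, |f u - f v| ≤ dist u v),
          μ {u | f u - ∫ v, f v ∂μ ≥ x}) =
        μ {u | (-Metric.infDist u A) - ∫ v, (-Metric.infDist v A) ∂μ ≥ x} := by
  classical
  have hVne : Nonempty V := by
    rcases isEmpty_or_nonempty V with h | h
    · exfalso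
      have h1 : μ Set.univ = 1 := measure_univ
      rw [Set.univ_eq_empty_iff.2 h, measure_empty] at h1
      exact zero_ne_one h1
    · exact h
  -- the candidate value for a set A
  set c : Set V → ENNReal := fun A =>
    μ {u | (-Metric.infDist u A) - ∫ v, (-Metric.infDist v A) ∂μ ≥ x} with hc
  -- maximize c over nonempty finsets
  have hsne : (Finset.univ.filter fun A : Finset V => A.Nonempty).Nonempty := by
    refine ⟨{Classical.arbitrary V}, ?_⟩
    simp
  obtain ⟨A₀, hA₀mem, hmax⟩ :=
    Finset.exists_max_image (Finset.univ.filter fun A : Finset V => A.Nonempty)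
      (fun A => c ↑A) hsne
  have hA₀ne : (↑A₀ : Set V).Nonempty := by
    have := (Finset.mem_filter.1 hA₀mem).2
    exact Finset.coe_nonempty.2 this
  -- key step: for any Lipschitz f with nonempty event, μ(event f) ≤ c (event f)
  have key : ∀ f : V → ℝ, (∀ u v, |f u - f v| ≤ dist u v) →
      ∀ _ : {u | f u - ∫ v, f v ∂μ ≥ x}.Nonempty,
      μ {u | f u - ∫ v, f v ∂μ ≥ x} ≤ c {u | f u - ∫ v, f v ∂μ ≥ x} := by
    intro f hf hne
    set A : Set V := {u | f u - ∫ v, f v ∂μ ≥ x} with hA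
    have hx : x ≤ ∫ v, Metric.infDist v A ∂μ := aux_int_infDist μ x f hf hne
    refine measure_mono fun u hu => ?_
    have h0 : Metric.infDist u A = 0 := Metric.infDist_zero_of_mem hu
    show (-Metric.infDist u A) - ∫ v, (-Metric.infDist v A) ∂μ ≥ x
    rw [h0, integral_neg]
    simpa using hx
  refine ⟨↑A₀, hA₀ne, le_antisymm ?_ ?_⟩
  · refine iSup_le fun f => iSup_le fun hf => ?_
    by_cases hne : {u | f u - ∫ v, f v ∂μ ≥ x}.Nonempty
    · have h1 := key f hf hne
      set A : Set V := {u | f u - ∫ v, f v ∂μ ≥ x} with hA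
      have hAfin : A.Finite := Set.toFinite A
      have hmem : hAfin.toFinset ∈ Finset.univ.filter fun A : Finset V => A.Nonempty := by
        simp only [Finset.mem_filter, Finset.mem_univ, true_and]
        rw [← Finset.coe_nonempty, Set.Finite.coe_toFinset]
        exact hne
      have h2 := hmax hAfin.toFinset hmem
      rw [Set.Finite.coe_toFinset] at h2
      exact h1.trans h2
    · rw [Set.not_nonempty_iff_eq_empty] at hne
      rw [hne]
      simp
  · have hlip : ∀ u v : V, |(fun u => -Metric.infDist u (↑A₀ : Set V)) u -
        (fun u => -Metric.infDist u (↑A₀ : Set V)) v| ≤ dist u v := by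
      intro u v
      simp only
      have h := (Metric.lipschitz_infDist_pt (↑A₀ : Set V)).dist_le_mul u v
      rw [Real.dist_eq, NNReal.coe_one, one_mul] at h
      rw [show -Metric.infDist u (↑A₀ : Set V) - -Metric.infDist v (↑A₀ : Set V) =
        -(Metric.infDist u (↑A₀ : Set V) - Metric.infDist v (↑A₀ : Set V)) by ring, abs_neg]
      exact h
    exact le_iSup₂ (f := fun (f : V → ℝ) (_ : ∀ u v, |f u - f v| ≤ dist u v) =>
      μ {u | f u - ∫ v, f v ∂μ ≥ x}) (fun u => -Metric.infDist u (↑A₀ : Set V)) hlip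
end

section
/- Let γ_1 be the standard Gaussian measure on ℝ with Euclidean distance. For a half-line A = (-∞, a], the function f*(u) = -d(A,u) = -max(u - a, 0) satisfies: for every x ∈ ℝ, γ_1{u : f*(u) - E f* ≥ x} = Φ(a + E d(A,·) - x) if E d(A,·) - x ≥ 0 and equals 0 otherwise, where Φ is the standard normal CDF and E d(A,·) = ∫_a^∞ (u - a) dγ_1(u). -/
open MeasureTheory ProbabilityTheory

theorem stmt_11 (a : ℝ) (m : ℝ)
    (hm : m = ∫ u, max (u - a) 0 ∂(gaussianReal 0 1)) (x : ℝ) :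
    (0 ≤ m - x →
      gaussianReal 0 1 {u | (fun u => -max (u - a) 0) u -
          ∫ v, (fun v => -max (v - a) 0) v ∂(gaussianReal 0 1) ≥ x} =
        gaussianReal 0 1 (Set.Iic (a + m - x))) ∧
    (m - x < 0 →
      gaussianReal 0 1 {u | (fun u => -max (u - a) 0) u -
          ∫ v, (fun v => -max (v - a) 0) v ∂(gaussianReal 0 1) ≥ x} = 0) := by
  have hint : (∫ v, (fun v => -max (v - a) 0) v ∂(gaussianReal 0 1)) = -m := by
    simp only
    rw [integral_neg, ← hm]
  constructor
  · intro h
    congr 1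
    ext u
    simp only [Set.mem_setOf_eq, Set.mem_Iic, hint]
    constructor
    · intro hu
      have h1 := le_max_left (u - a) 0
      linarith
    · intro hu
      have : max (u - a) 0 ≤ m - x := max_le (by linarith) h
      linarith
  · intro h
    have hset : {u | (fun u => -max (u - a) 0) u -
        ∫ v, (fun v => -max (v - a) 0) v ∂(gaussianReal 0 1) ≥ x} = (∅ : Set ℝ) := by
      ext u
      simp only [Set.mem_setOf_eq, Set.mem_empty_iff_false, iff_false, hint]
      intro hu
      have := le_max_right (u - a) 0
      linarith
    rw [hset, measure_empty]
end

section
/- Let (V,d,μ) be a probability metric space, f : V → ℝ integrable and 1-Lipschitz, x ∈ ℝ, and suppose B = {u : f(u) - E_μ f ≥ x} is nonempty with c = inf_{v ∈ B} f(v) > -∞. Define g(u) = c - d(B,u). Then g is 1-Lipschitz, g ≤ f pointwise, E_μ g ≤ E_μ f, and consequently μ{u : f(u) - E_μ f ≥ x} ≤ μ{u : g(u) - E_μ g ≥ x}, provided g is integrable. -/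
open MeasureTheory

theorem stmt_12 {V : Type*} [MetricSpace V] [MeasurableSpace V] [BorelSpace V]
    (μ : Measure V) [IsProbabilityMeasure μ]
    (f : V → ℝ) (hlip : ∀ u v, |f u - f v| ≤ dist u v) (hint : Integrable f μ)
    (x : ℝ) (B : Set V) (hB : B = {u | f u - ∫ v, f v ∂μ ≥ x}) (hBne : B.Nonempty)
    (hbdd : BddBelow (f '' B)) (c : ℝ) (hc : c = sInf (f '' B))
    (g : V → ℝ) (hg : g = fun u => c - Metric.infDist u B)
    (hgint : Integrable g μ) :
    (∀ u v, |g u - g v| ≤ dist u v) ∧ (∀ u, g u ≤ f u) ∧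
    (∫ v, g v ∂μ ≤ ∫ v, f v ∂μ) ∧
    μ {u | f u - ∫ v, f v ∂μ ≥ x} ≤ μ {u | g u - ∫ v, g v ∂μ ≥ x} := by
  have hglip : ∀ u v, |g u - g v| ≤ dist u v := by
    intro u v
    simp only [hg]
    have h1 : Metric.infDist u B ≤ Metric.infDist v B + dist u v :=
      Metric.infDist_le_infDist_add_dist
    have h2 : Metric.infDist v B ≤ Metric.infDist u B + dist v u :=
      Metric.infDist_le_infDist_add_dist
    rw [dist_comm v u] at h2
    rw [abs_le]; constructor <;> [linarith; linarith]
  have hgle : ∀ u, g u ≤ f u := by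
    intro u
    simp only [hg]
    rw [sub_le_iff_le_add]
    -- c ≤ infDist u B + f u: for any b ∈ B and ε, there's b with d(u,b) < infDist + ε
    have : ∀ b ∈ B, c ≤ dist u b + f u := by
      intro b hb
      have h1 : c ≤ f b := hc ▸ csInf_le hbdd ⟨b, hb, rfl⟩
      have h2 : f b - f u ≤ dist b u := (abs_le.mp (hlip b u)).2
      rw [dist_comm]
      linarith
    by_contra h
    push_neg at h
    obtain ⟨b, hb, hdb⟩ := (Metric.infDist_lt_iff hBne).mp
      (by linarith : Metric.infDist u B < c - f u)
    exact absurd (this b hb) (by linarith)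
  have hintle : ∫ v, g v ∂μ ≤ ∫ v, f v ∂μ := integral_mono hgint hint hgle
  refine ⟨hglip, hgle, hintle, ?_⟩
  apply measure_mono
  intro u hu
  have huB : u ∈ B := hB ▸ hu
  have hg0 : g u = c := by simp [hg, Metric.infDist_zero_of_mem huB]
  have hcx : x + ∫ v, f v ∂μ ≤ c := by
    rw [hc]
    apply le_csInf (hBne.image f)
    rintro y ⟨b, hb, rfl⟩
    have : f b - ∫ v, f v ∂μ ≥ x := by rw [hB] at hb; exact hb
    linarith
  simp only [Set.mem_setOf_eq, hg0, ge_iff_le]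
  linarith
end
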